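/- arXiv:1205.5601 — 2 statements merged into one kernel-verified Lean document; each statement's English description precedes it below -/
import Mathlib

section
/- Adopt the spectral setup and the finite element setup. Then for every δ ∈ [0,1/2] and every x ∈ H: ‖A_h^{−δ} P_h x‖ ≤ (Σ_k λ_k^{−2δ} (x,e_k)²)^{1/2} = ‖A^{−δ} x‖. In particular, for δ = 1/2, ‖A_h^{−1/2} P_h x‖ ≤ ‖A^{−1/2} x‖. -/
open MeasureTheory Filter Set
open scoped ENNReal NNReal RealInnerProductSpace

noncomputable section

/-- The Laplace transform `b̂(z) = ∫₀^∞ e^{-zt} b(t) dt` of a real-valued kernel `b`. -/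
def laplaceTransform (b : ℝ → ℝ) (z : ℂ) : ℂ :=
  ∫ t in Set.Ioi (0 : ℝ), Complex.exp (-z * t) * (b t : ℂ)

/-- Assumption 1: `b` is a nonzero, locally integrable, 3-monotone kernel
(with derivative `b'` on `(0,∞)`), `b(t) → 0` as `t → ∞`, and the angle condition
`ρ = 1 + (2/π) sup{|arg b̂(λ)| : Re λ > 0} ∈ (1,2)` holds. -/
structure Assumption1 (b b' : ℝ → ℝ) (ρ : ℝ) : Prop where
  locInt : ∀ T > 0, IntegrableOn b (Set.Ioc 0 T)
  ne_zero : ∃ t > 0, b t ≠ 0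
  nonneg : ∀ t > 0, 0 ≤ b t
  anti : AntitoneOn b (Set.Ioi 0)
  cvx : ConvexOn ℝ (Set.Ioi 0) b
  hasDeriv : ∀ t > 0, HasDerivAt b (b' t) t
  deriv_nonpos : ∀ t > 0, b' t ≤ 0
  deriv_anti : AntitoneOn (fun t => -(b' t)) (Set.Ioi 0)
  deriv_cvx : ConvexOn ℝ (Set.Ioi 0) (fun t => -(b' t))
  tendsto_zero : Tendsto b atTop (nhds 0)
  rho_eq : ρ = 1 + (2 / Real.pi) *
      sSup {θ : ℝ | ∃ z : ℂ, 0 < z.re ∧ θ = |(laplaceTransform b z).arg|}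
  rho_mem : ρ ∈ Set.Ioo (1 : ℝ) 2

/-- Assumption 2: `b̂` extends analytically to a sector `Σ_θ`, `θ > π/2`, with the
bounds `|b̂^{(k)}(z)| ≤ C |z|^{1-ρ-k}`, `k = 0,1`, there. -/
structure Assumption2 (b : ℝ → ℝ) (ρ θ : ℝ) : Prop where
  theta_gt : Real.pi / 2 < θ
  holo : ∃ B : ℂ → ℂ,
    (∀ z : ℂ, z ≠ 0 → |z.arg| < θ → DifferentiableAt ℂ B z) ∧
    (∀ z : ℂ, 0 < z.re → B z = laplaceTransform b z) ∧
    ∃ C > 0, (∀ z : ℂ, z ≠ 0 → |z.arg| < θ → ‖B z‖ ≤ C * ‖z‖ ^ (1 - ρ)) ∧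
      (∀ z : ℂ, z ≠ 0 → |z.arg| < θ → ‖deriv B z‖ ≤ C * ‖z‖ ^ (-ρ))

/-- `s` (with derivative `s'` on `(0,∞)`) solves the scalar Volterra equation
`s'(t) + λ ∫₀ᵗ b(t-u) s(u) du = 0`, `s(0) = 1`. -/
structure IsScalarSolution (b : ℝ → ℝ) (lam : ℝ) (s s' : ℝ → ℝ) : Prop where
  init : s 0 = 1
  cont : ContinuousOn s (Set.Ici 0)
  hasDeriv : ∀ t > 0, HasDerivAt s (s' t) t
  eqn : ∀ t > 0, s' t + lam * ∫ u in (0 : ℝ)..t, b (t - u) * s u = 0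

/-- The resolvent family `S(t)x = Σ_k s_k(t) (x,e_k) e_k`. -/
def Sop {H : Type*} [NormedAddCommGroup H] [InnerProductSpace ℝ H]
    (e : HilbertBasis ℕ ℝ H) (s : ℕ → ℝ → ℝ) (t : ℝ) (x : H) : H :=
  ∑' k, (s k t * ⟪x, e k⟫) • (e k : H)

/-- The Backward Euler convolution quadrature operator
`B_k = ∫₀^∞ F(Δt s) e^{-s} s^{k-1}/(k-1)! ds`. -/
def quadB {H : Type*} [NormedAddCommGroup H] [NormedSpace ℝ H]
    (Δt : ℝ) (F : ℝ → H) (k : ℕ) : H :=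
  ∫ u in Set.Ioi (0 : ℝ),
    (Real.exp (-u) * u ^ (k - 1) / (Nat.factorial (k - 1) : ℝ)) • F (Δt * u)

/-- The finite element setup: `f` is an orthonormal basis of the finite dimensional
subspace `V_h ⊆ D(A^{1/2})`, consisting of eigenvectors of the discrete operator `A_h`
(defined via the bilinear form `a(u,v) = Σ_k λ_k (u,e_k)(v,e_k)`) with positive
eigenvalues `μ`. -/
structure FESetup {H : Type*} [NormedAddCommGroup H] [InnerProductSpace ℝ H]
    (e : HilbertBasis ℕ ℝ H) (lam : ℕ → ℝ) (N : ℕ) (f : Fin N → H) (μ : Fin N → ℝ) :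
    Prop where
  f_orth : Orthonormal ℝ f
  mu_pos : ∀ j, 0 < μ j
  f_dom : ∀ j, (∑' k, ENNReal.ofReal (lam k * ⟪f j, e k⟫ ^ 2)) < ⊤
  eigen : ∀ j j', (∑' k, lam k * ⟪f j, e k⟫ * ⟪f j', e k⟫) = μ j * ⟪f j, f j'⟫

/-!
For `t ≥ 0` put `χ = (t + A_h)⁻¹ P_h x = ∑ⱼ (x, fⱼ) / (t + μⱼ) fⱼ`. Then `(x, χ)` and the energy
`∑ₖ (t + λₖ) (χ, eₖ)²` both equal `S_h(t) = ∑ⱼ (x, fⱼ)² / (t + μⱼ)`, while coordinatewise AM-GM gives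
`2 (x, χ) ≤ ∑ₖ (x, eₖ)² / (t + λₖ) + ∑ₖ (t + λₖ) (χ, eₖ)²`. Hence the resolvent comparison
`S_h(t) ≤ S(t) = ∑ₖ (x, eₖ)² / (t + λₖ)`, which at `t = 0` is the case `δ = 1/2`.
For `0 < θ = 2δ < 1`, the representation `c^(-θ) = K_θ⁻¹ ∫₀^∞ s^(-θ) / (s + c) ds` with
`0 < K_θ < ∞` turns the comparison, integrated against `s^(-θ)`, into the claim.
The case `δ = 0` is Bessel's inequality.
-/

namespace HilbertBasis

variable {ι H : Type*} [NormedAddCommGroup H] [InnerProductSpace ℝ H] (e : HilbertBasis ι ℝ H)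

theorem hasSum_real_inner_mul_inner (x y : H) :
    HasSum (fun k => ⟪x, e k⟫ * ⟪y, e k⟫) ⟪x, y⟫ := by
  simpa only [real_inner_comm y] using e.hasSum_inner_mul_inner x y

theorem hasSum_sq_real_inner (x : H) :
    HasSum (fun k => ⟪x, e k⟫ ^ 2) (‖x‖ ^ 2) := by
  simpa only [← sq, real_inner_self_eq_norm_sq] using e.hasSum_real_inner_mul_inner x x

theorem ofReal_sum_sq_inner_le_tsum {κ : Type*} [Fintype κ] {f : κ → H} (hf : Orthonormal ℝ f)
    (x : H) : ENNReal.ofReal (∑ j, ⟪x, f j⟫ ^ 2) ≤ ∑' k, ENNReal.ofReal (⟪x, e k⟫ ^ 2) := by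
  have hbessel : ∑ j, ⟪x, f j⟫ ^ 2 ≤ ‖x‖ ^ 2 := by
    simpa only [real_inner_comm x, Real.norm_eq_abs, sq_abs] using
      hf.sum_inner_products_le (s := Finset.univ) x
  rw [← ENNReal.ofReal_tsum_of_nonneg (fun k => sq_nonneg _) (e.hasSum_sq_real_inner x).summable,
    (e.hasSum_sq_real_inner x).tsum_eq]
  exact ENNReal.ofReal_le_ofReal hbessel

end HilbertBasis

theorem summable_of_tsum_ofReal_ne_top {ι : Type*} {u : ι → ℝ} (hu : ∀ k, 0 ≤ u k)
    (h : ∑' k, ENNReal.ofReal (u k) ≠ ⊤) : Summable u :=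
  (ENNReal.summable_toReal h).congr fun k => ENNReal.toReal_ofReal (hu k)

theorem Summable.mul_mul_of_mul_sq {ι : Type*} {w u v : ι → ℝ} (hw : ∀ k, 0 ≤ w k)
    (hu : Summable fun k => w k * u k ^ 2) (hv : Summable fun k => w k * v k ^ 2) :
    Summable fun k => w k * u k * v k := by
  refine Summable.of_norm_bounded ((hu.add hv).div_const 2) fun k => ?_
  rw [Real.norm_eq_abs, abs_mul, abs_mul, abs_of_nonneg (hw k), ← sq_abs (u k), ← sq_abs (v k)]
  nlinarith [mul_nonneg (hw k) (sq_nonneg (|u k| - |v k|))]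

theorem two_mul_mul_le_sq_div_add_mul_sq {a b c : ℝ} (hc : 0 < c) :
    2 * (a * b) ≤ a ^ 2 / c + c * b ^ 2 := by
  have key : a ^ 2 / c + c * b ^ 2 - 2 * (a * b) = (a - c * b) ^ 2 / c := by
    field_simp
    ring
  linarith [div_nonneg (sq_nonneg (a - c * b)) hc.le]

namespace FESetup

variable {H : Type*} [NormedAddCommGroup H] [InnerProductSpace ℝ H] {e : HilbertBasis ℕ ℝ H}
  {lam : ℕ → ℝ} {N : ℕ} {f : Fin N → H} {μ : Fin N → ℝ}

theorem summable_lam_mul_sq (hfe : FESetup e lam N f μ) (hlam : ∀ k, 0 ≤ lam k) (j : Fin N) :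
    Summable fun k => lam k * ⟪f j, e k⟫ ^ 2 :=
  summable_of_tsum_ofReal_ne_top (fun k => mul_nonneg (hlam k) (sq_nonneg _)) (hfe.f_dom j).ne

theorem hasSum_lam_mul_inner_mul_inner (hfe : FESetup e lam N f μ) (hlam : ∀ k, 0 ≤ lam k)
    (j j' : Fin N) :
    HasSum (fun k => lam k * ⟪f j, e k⟫ * ⟪f j', e k⟫) (μ j * ⟪f j, f j'⟫) := by
  rw [← hfe.eigen j j']
  exact ((hfe.summable_lam_mul_sq hlam j).mul_mul_of_mul_sq hlam
    (hfe.summable_lam_mul_sq hlam j')).hasSum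

theorem hasSum_lam_mul_sq_inner_sum_smul (hfe : FESetup e lam N f μ) (hlam : ∀ k, 0 ≤ lam k)
    (g : Fin N → ℝ) :
    HasSum (fun k => lam k * ⟪∑ j, g j • f j, e k⟫ ^ 2) (∑ j, μ j * g j ^ 2) := by
  have hsum : HasSum (fun k => ∑ j, ∑ j', g j * g j' * (lam k * ⟪f j, e k⟫ * ⟪f j', e k⟫))
      (∑ j, ∑ j', g j * g j' * (μ j * ⟪f j, f j'⟫)) :=
    hasSum_sum fun j _ => hasSum_sum fun j' _ =>
      (hfe.hasSum_lam_mul_inner_mul_inner hlam j j').mul_left (g j * g j')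
  convert hsum using 2 with k
  · simp only [sum_inner, real_inner_smul_left, sq, Finset.mul_sum, Finset.sum_mul]
    exact Finset.sum_congr rfl fun j _ => Finset.sum_congr rfl fun j' _ => by ring
  · simp only [orthonormal_iff_ite.mp hfe.f_orth, mul_ite, mul_one, mul_zero, Finset.sum_ite_eq,
      Finset.mem_univ, ↓reduceIte]
    ring

theorem add_const (hfe : FESetup e lam N f μ) (hlam : ∀ k, 0 ≤ lam k) {t : ℝ} (ht : 0 ≤ t) :
    FESetup e (fun k => t + lam k) N f (fun j => t + μ j) where
  f_orth := hfe.f_orth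
  mu_pos j := add_pos_of_nonneg_of_pos ht (hfe.mu_pos j)
  f_dom j := by
    have hsum : Summable fun k => (t + lam k) * ⟪f j, e k⟫ ^ 2 := by
      simpa only [add_mul] using
        ((e.hasSum_sq_real_inner (f j)).summable.mul_left t).add (hfe.summable_lam_mul_sq hlam j)
    rw [← ENNReal.ofReal_tsum_of_nonneg
      (fun k => mul_nonneg (add_nonneg ht (hlam k)) (sq_nonneg _)) hsum]
    exact ENNReal.ofReal_lt_top
  eigen j j' := by
    have hsum := ((e.hasSum_real_inner_mul_inner (f j) (f j')).mul_left t).add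
      (hfe.hasSum_lam_mul_inner_mul_inner hlam j j')
    rw [add_mul]
    exact HasSum.tsum_eq (by simpa only [add_mul, mul_assoc] using hsum)

theorem sum_sq_inner_div_le (hfe : FESetup e lam N f μ) (hlam : ∀ k, 0 < lam k) (x : H) :
    ENNReal.ofReal (∑ j, ⟪x, f j⟫ ^ 2 / μ j) ≤ ∑' k, ENNReal.ofReal (⟪x, e k⟫ ^ 2 / lam k) := by
  have hterm_nonneg k : 0 ≤ ⟪x, e k⟫ ^ 2 / lam k := div_nonneg (sq_nonneg _) (hlam k).le
  by_cases htop : ∑' k, ENNReal.ofReal (⟪x, e k⟫ ^ 2 / lam k) = ⊤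
  · exact htop ▸ le_top
  have hS := summable_of_tsum_ofReal_ne_top hterm_nonneg htop
  rw [← ENNReal.ofReal_tsum_of_nonneg hterm_nonneg hS]
  refine ENNReal.ofReal_le_ofReal ?_
  set Sh := ∑ j, ⟪x, f j⟫ ^ 2 / μ j
  set χ := ∑ j, (⟪x, f j⟫ / μ j) • f j
  have hxχ : HasSum (fun k => ⟪x, e k⟫ * ⟪χ, e k⟫) Sh := by
    convert e.hasSum_real_inner_mul_inner x χ using 1
    simp only [χ, Sh, inner_sum, real_inner_smul_right]
    exact Finset.sum_congr rfl fun j _ => by ring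
  have hχ : HasSum (fun k => lam k * ⟪χ, e k⟫ ^ 2) Sh := by
    convert hfe.hasSum_lam_mul_sq_inner_sum_smul (fun k => (hlam k).le) _ using 1
    exact Finset.sum_congr rfl fun j _ => by field_simp [(hfe.mu_pos j).ne']
  have h2Sh : 2 * Sh ≤ (∑' k, ⟪x, e k⟫ ^ 2 / lam k) + Sh :=
    hasSum_le (fun k => two_mul_mul_le_sq_div_add_mul_sq (hlam k)) (hxχ.mul_left 2)
      (hS.hasSum.add hχ)
  linarith

end FESetup

/-- `K_θ = π / sin (π θ)` for `0 < θ < 1`. -/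
def stieltjesConst (θ : ℝ) : ℝ≥0∞ :=
  ∫⁻ s in Ioi 0, ENNReal.ofReal (s ^ (-θ) / (s + 1))

theorem stieltjesConst_pos (θ : ℝ) : 0 < stieltjesConst θ := by
  rw [stieltjesConst, setLIntegral_pos_iff (by fun_prop)]
  have hsupp : Ioi (0 : ℝ) ⊆ Function.support (fun s : ℝ => ENNReal.ofReal (s ^ (-θ) / (s + 1))) :=
    fun s (hs : 0 < s) => (ENNReal.ofReal_pos.2 (by positivity)).ne'
  rw [inter_eq_right.2 hsupp, Real.volume_Ioi]
  exact ENNReal.zero_lt_top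

theorem integrableOn_rpow_neg_div_add_one {θ : ℝ} (hθ0 : 0 < θ) (hθ1 : θ < 1) :
    IntegrableOn (fun s : ℝ => s ^ (-θ) / (s + 1)) (Ioi 0) := by
  have hmeas {s : Set ℝ} : AEStronglyMeasurable (fun s : ℝ => s ^ (-θ) / (s + 1))
      (volume.restrict s) :=
    ((measurable_id.pow_const _).div (measurable_id.add_const 1)).aestronglyMeasurable
  rw [← Ioc_union_Ioi_eq_Ioi zero_le_one]
  refine IntegrableOn.union ?_ ?_
  · have hdom : IntegrableOn (fun s : ℝ => s ^ (-θ)) (Ioc 0 1) :=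
      (intervalIntegrable_iff_integrableOn_Ioc_of_le zero_le_one).1
        (intervalIntegral.intervalIntegrable_rpow' (by linarith))
    refine hdom.mono' hmeas ((ae_restrict_iff' measurableSet_Ioc).2 (ae_of_all _ ?_))
    rintro s ⟨hs, -⟩
    rw [Real.norm_of_nonneg (by positivity)]
    exact div_le_self (by positivity) (by linarith)
  · have hdom : IntegrableOn (fun s : ℝ => s ^ (-θ - 1)) (Ioi 1) :=
      integrableOn_Ioi_rpow_of_lt (by linarith) one_pos
    refine hdom.mono' hmeas ((ae_restrict_iff' measurableSet_Ioi).2 (ae_of_all _ ?_))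
    intro s (hs : 1 < s)
    rw [Real.norm_of_nonneg (by positivity), Real.rpow_sub (by positivity), Real.rpow_one]
    exact div_le_div_of_nonneg_left (by positivity) (by positivity) (by linarith)

theorem stieltjesConst_lt_top {θ : ℝ} (hθ0 : 0 < θ) (hθ1 : θ < 1) : stieltjesConst θ < ⊤ :=
  (integrableOn_rpow_neg_div_add_one hθ0 hθ1).setLIntegral_lt_top

theorem lintegral_rpow_neg_div_add (θ : ℝ) {c : ℝ} (hc : 0 < c) :
    ∫⁻ s in Ioi 0, ENNReal.ofReal (s ^ (-θ) / (s + c)) =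
      ENNReal.ofReal (c ^ (-θ)) * stieltjesConst θ := by
  nth_rewrite 1 [← image_const_mul_Ioi_zero hc]
  rw [lintegral_image_eq_lintegral_abs_deriv_mul (f' := fun _ => c) measurableSet_Ioi
      (fun u _ => by simpa using ((hasDerivAt_id' u).const_mul c).hasDerivWithinAt)
      (mul_right_injective₀ hc.ne').injOn,
    stieltjesConst, ← lintegral_const_mul' _ _ ENNReal.ofReal_ne_top]
  refine setLIntegral_congr_fun measurableSet_Ioi fun u (hu : 0 < u) => ?_
  rw [← ENNReal.ofReal_mul (abs_nonneg _), ← ENNReal.ofReal_mul (by positivity)]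
  congr 1
  rw [abs_of_pos hc, Real.mul_rpow hc.le hu.le]
  field_simp

theorem ofReal_rpow_neg_mul_mul_stieltjesConst (θ : ℝ) {c : ℝ} (hc : 0 < c) (a : ℝ) :
    ENNReal.ofReal (c ^ (-θ) * a) * stieltjesConst θ =
      ∫⁻ s in Ioi 0, ENNReal.ofReal (s ^ (-θ)) * ENNReal.ofReal (a / (s + c)) := by
  have hintegrand : ∀ s ∈ Ioi (0 : ℝ), ENNReal.ofReal (s ^ (-θ)) * ENNReal.ofReal (a / (s + c)) =
      ENNReal.ofReal a * ENNReal.ofReal (s ^ (-θ) / (s + c)) := fun s (hs : 0 < s) => by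
    rw [← ENNReal.ofReal_mul (by positivity), ← ENNReal.ofReal_mul' (by positivity)]
    ring_nf
  rw [setLIntegral_congr_fun measurableSet_Ioi hintegrand,
    lintegral_const_mul' _ _ ENNReal.ofReal_ne_top, lintegral_rpow_neg_div_add θ hc,
    ENNReal.ofReal_mul (by positivity)]
  ring

theorem sum_ofReal_rpow_neg_mul_le_of_resolvent_le {ι κ : Type*} [Fintype ι] [Countable κ]
    {μ a : ι → ℝ} {lam b : κ → ℝ} (hμ : ∀ i, 0 < μ i) (hlam : ∀ k, 0 < lam k)
    (hres : ∀ s > 0,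
      ∑ i, ENNReal.ofReal (a i / (s + μ i)) ≤ ∑' k, ENNReal.ofReal (b k / (s + lam k)))
    {θ : ℝ} (hθ0 : 0 < θ) (hθ1 : θ < 1) :
    ∑ i, ENNReal.ofReal (μ i ^ (-θ) * a i) ≤ ∑' k, ENNReal.ofReal (lam k ^ (-θ) * b k) := by
  have hmeas (c d : ℝ) :
      Measurable fun s : ℝ => ENNReal.ofReal (s ^ (-θ)) * ENNReal.ofReal (d / (s + c)) := by
    fun_prop
  refine (ENNReal.mul_le_mul_iff_left (stieltjesConst_pos θ).ne'
    (stieltjesConst_lt_top hθ0 hθ1).ne).1 ?_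
  calc (∑ i, ENNReal.ofReal (μ i ^ (-θ) * a i)) * stieltjesConst θ
      = ∫⁻ s in Ioi 0, ∑ i, ENNReal.ofReal (s ^ (-θ)) * ENNReal.ofReal (a i / (s + μ i)) := by
        rw [Finset.sum_mul, lintegral_finsetSum _ fun i _ => hmeas _ _]
        exact Finset.sum_congr rfl fun i _ => ofReal_rpow_neg_mul_mul_stieltjesConst θ (hμ i) _
    _ ≤ ∫⁻ s in Ioi 0, ∑' k, ENNReal.ofReal (s ^ (-θ)) * ENNReal.ofReal (b k / (s + lam k)) := by
        refine setLIntegral_mono' measurableSet_Ioi fun s hs => ?_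
        rw [← Finset.mul_sum, ENNReal.tsum_mul_left]
        exact mul_le_mul_right (hres s hs) _
    _ = (∑' k, ENNReal.ofReal (lam k ^ (-θ) * b k)) * stieltjesConst θ := by
        rw [lintegral_tsum fun k => (hmeas _ _).aemeasurable, ← ENNReal.tsum_mul_right]
        exact tsum_congr fun k => (ofReal_rpow_neg_mul_mul_stieltjesConst θ (hlam k) _).symm

theorem statement6_general {H : Type*} [NormedAddCommGroup H] [InnerProductSpace ℝ H]
    (e : HilbertBasis ℕ ℝ H) (lam : ℕ → ℝ)
    (hlam_pos : ∀ k, 0 < lam k)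
    (N : ℕ) (f : Fin N → H) (μ : Fin N → ℝ) (hfe : FESetup e lam N f μ) :
    ∀ δ ∈ Set.Icc (0 : ℝ) (1 / 2), ∀ x : H,
      ENNReal.ofReal (∑ j, μ j ^ (-(2 * δ)) * ⟪x, f j⟫ ^ 2) ≤
        ∑' k, ENNReal.ofReal (lam k ^ (-(2 * δ)) * ⟪x, e k⟫ ^ 2) := by
  rintro δ ⟨hδ0, hδ1⟩ x
  rcases hδ0.eq_or_lt with rfl | hδ0
  · simpa only [mul_zero, neg_zero, Real.rpow_zero, one_mul] using
      e.ofReal_sum_sq_inner_le_tsum hfe.f_orth x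
  rcases hδ1.eq_or_lt with rfl | hδ1
  · simpa [Real.rpow_neg_one, inv_mul_eq_div] using hfe.sum_sq_inner_div_le hlam_pos x
  rw [ENNReal.ofReal_sum_of_nonneg fun j _ =>
    mul_nonneg (Real.rpow_nonneg (hfe.mu_pos j).le _) (sq_nonneg _)]
  refine sum_ofReal_rpow_neg_mul_le_of_resolvent_le hfe.mu_pos hlam_pos (fun s hs => ?_)
    (by linarith) (by linarith)
  have hshift := hfe.add_const (fun k => (hlam_pos k).le) hs.le
  rw [← ENNReal.ofReal_sum_of_nonneg fun j _ =>
    div_nonneg (sq_nonneg _) (hshift.mu_pos j).le]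
  exact hshift.sum_sq_inner_div_le (fun k => add_pos hs (hlam_pos k)) x

/-- `‖A_h^{-δ} P_h x‖ ≤ ‖A^{-δ} x‖` for `δ ∈ [0,1/2]`, in the spectral
(Parseval) form: the left side is computed in the discrete eigenbasis `f`, the right
side in the eigenbasis `e` of `A`. -/
theorem statement6 {H : Type*} [NormedAddCommGroup H] [InnerProductSpace ℝ H]
    [CompleteSpace H]
    (e : HilbertBasis ℕ ℝ H) (lam : ℕ → ℝ)
    (hlam_pos : ∀ k, 0 < lam k) (hlam_mono : Monotone lam)
    (hlam_top : Tendsto lam atTop atTop)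
    (N : ℕ) (f : Fin N → H) (μ : Fin N → ℝ) (hfe : FESetup e lam N f μ) :
    ∀ δ ∈ Set.Icc (0 : ℝ) (1 / 2), ∀ x : H,
      ENNReal.ofReal (∑ j, μ j ^ (-(2 * δ)) * ⟪x, f j⟫ ^ 2) ≤
        ∑' k, ENNReal.ofReal (lam k ^ (-(2 * δ)) * ⟪x, e k⟫ ^ 2) :=
  statement6_general e lam hlam_pos N f μ hfe
end
end

section
/- Let H be a real separable Hilbert space, let F : [0,∞) → H be strongly measurable and bounded, let Δt > 0, and for Re z > 0 define the Laplace transform F̂(z) := ∫₀^∞ e^{−zt} F(t) dt. Then for every complex z with |z| < 1: z · (1/Δt) · F̂((1−z)/Δt) = Σ_{k=1}^∞ z^k ∫₀^∞ F(Δt s) · e^{−s} s^{k−1}/(k−1)! ds, where the series converges absolutely in H. (This identity shows that the Backward Euler convolution quadrature operators B_k, defined by the generating function identity Σ_k B_k z^k = ((1−z)I + b̂((1−z)/Δt)·Δt·A)^{−1}(I + b̂((1−z)/Δt)·Δt·A), admit the integral representation B_k x = ∫₀^∞ S(Δt s) x · e^{−s} s^{k−1}/(k−1)! ds for k ≥ 1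 in terms of the resolvent family S.) -/
/-!
Substituting `t = Δt u` turns `(z/Δt) F̂((1-z)/Δt)` into `z ∫₀^∞ e^{-(1-z)u} F(Δt u) du`.
Expanding `e^{zu}` gives `e^{-(1-z)u} = Σ_m z^m e^{-u} u^m/m!`, a power series whose coefficients
are Erlang densities of total mass one; so the `m`-th term contributes at most `‖z‖^m sup ‖F‖`
in norm, and this geometric bound lets the sum be exchanged with the integral.
-/

open MeasureTheory Filter Set
open scoped ENNReal NNReal RealInnerProductSpace

noncomputable section

def erlangDensity (m : ℕ) (u : ℝ) : ℝ :=
  Real.exp (-u) * u ^ m / (Nat.factorial m : ℝ)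

lemma erlangDensity_nonneg (m : ℕ) {u : ℝ} (hu : 0 ≤ u) : 0 ≤ erlangDensity m u := by
  unfold erlangDensity; positivity

lemma erlangDensity_eq_rpow (m : ℕ) (u : ℝ) :
    erlangDensity m u = (Real.exp (-u) * u ^ ((m + 1 : ℝ) - 1)) / (m + 1 : ℝ).Gamma := by
  rw [erlangDensity, add_sub_cancel_right, Real.rpow_natCast, Real.Gamma_nat_eq_factorial]

lemma integrableOn_erlangDensity (m : ℕ) : IntegrableOn (erlangDensity m) (Ioi 0) :=
  IntegrableOn.congr_fun
    ((Real.GammaIntegral_convergent (s := m + 1) (by positivity)).div_const _)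
    (fun u _ => (erlangDensity_eq_rpow m u).symm) measurableSet_Ioi

lemma integral_erlangDensity (m : ℕ) : ∫ u in Ioi (0 : ℝ), erlangDensity m u = 1 := by
  simp_rw [erlangDensity_eq_rpow]
  rw [integral_div, ← Real.Gamma_eq_integral (by positivity),
    div_self (Real.Gamma_pos_of_pos (by positivity)).ne']

lemma hasSum_pow_mul_erlangDensity (z : ℂ) (u : ℝ) :
    HasSum (fun m => z ^ m * (erlangDensity m u : ℂ)) (Complex.exp (-(1 - z) * u)) := by
  have hterm : ∀ m : ℕ,
      z ^ m * (erlangDensity m u : ℂ) = (z * u) ^ m / (Nat.factorial m : ℂ) * Complex.exp (-u) := by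
    intro m
    rw [erlangDensity]
    push_cast
    ring
  simp_rw [hterm]
  rw [show -(1 - z) * u = z * u + -u by ring, Complex.exp_add, Complex.exp_eq_exp_ℂ]
  exact (NormedSpace.expSeries_div_hasSum_exp (z * u)).mul_right _

lemma summable_norm_pow_smul_of_norm_le {𝕜 E : Type*} [NormedField 𝕜] [SeminormedAddCommGroup E]
    [NormedSpace 𝕜 E] {x : ℕ → E} {M : ℝ} (hx : ∀ m, ‖x m‖ ≤ M) {z : 𝕜} (hz : ‖z‖ < 1) :
    Summable fun m => ‖z ^ m • x m‖ := by
  refine ((summable_geometric_of_lt_one (norm_nonneg z) hz).mul_right M).of_nonneg_of_le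
    (fun m => norm_nonneg _) fun m => ?_
  rw [norm_smul, norm_pow]
  exact mul_le_mul_of_nonneg_left (hx m) (by positivity)

lemma MeasureTheory.AEStronglyMeasurable.comp_const_mul_Ioi {E : Type*} [TopologicalSpace E]
    {F : ℝ → E} (hF : AEStronglyMeasurable F (volume.restrict (Ioi 0))) {c : ℝ} (hc : 0 < c) :
    AEStronglyMeasurable (fun u => F (c * u)) (volume.restrict (Ioi 0)) :=
  hF.comp_quasiMeasurePreserving <| (Measure.quasiMeasurePreserving_smul volume hc.ne').restrict
    fun _ hu => mul_pos hc hu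

lemma integral_Ioi_cexp_smul_comp_const_mul {E : Type*} [NormedAddCommGroup E] [NormedSpace ℂ E]
    (F : ℝ → E) (w : ℂ) {c : ℝ} (hc : 0 < c) :
    ∫ t in Ioi (0 : ℝ), Complex.exp (-(w / c) * t) • F t
      = (c : ℂ) • ∫ u in Ioi (0 : ℝ), Complex.exp (-w * u) • F (c * u) := by
  have hsubst := integral_comp_mul_left_Ioi' (fun t => Complex.exp (-(w / c) * t) • F t) 0 hc
  rw [mul_zero] at hsubst
  rw [Complex.coe_smul, ← hsubst]
  congr 2 with u
  have hc' : (c : ℂ) ≠ 0 := Complex.ofReal_ne_zero.mpr hc.ne'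
  push_cast
  field_simp

section BoundedFunction

variable {E : Type*} [NormedAddCommGroup E] {G : ℝ → E} {M : ℝ}

lemma norm_erlangDensity_smul_le [NormedSpace ℝ E] (hGM : ∀ u ∈ Ioi (0 : ℝ), ‖G u‖ ≤ M)
    (m : ℕ) : ∀ᵐ u ∂volume.restrict (Ioi 0), ‖erlangDensity m u • G u‖ ≤ erlangDensity m u * M := by
  filter_upwards [ae_restrict_mem measurableSet_Ioi] with u hu
  rw [norm_smul, Real.norm_of_nonneg (erlangDensity_nonneg m (le_of_lt hu))]
  exact mul_le_mul_of_nonneg_left (hGM u hu) (erlangDensity_nonneg m (le_of_lt hu))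

lemma integrable_erlangDensity_smul [NormedSpace ℝ E]
    (hG : AEStronglyMeasurable G (volume.restrict (Ioi 0))) (hGM : ∀ u ∈ Ioi (0 : ℝ), ‖G u‖ ≤ M)
    (m : ℕ) : Integrable (fun u => erlangDensity m u • G u) (volume.restrict (Ioi 0)) :=
  Integrable.mono' ((integrableOn_erlangDensity m).mul_const M)
    ((integrableOn_erlangDensity m).aestronglyMeasurable.smul hG) (norm_erlangDensity_smul_le hGM m)

lemma integral_norm_erlangDensity_smul_le [NormedSpace ℝ E] (hGM : ∀ u ∈ Ioi (0 : ℝ), ‖G u‖ ≤ M)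
    (m : ℕ) : ∫ u in Ioi 0, ‖erlangDensity m u • G u‖ ≤ M := by
  calc ∫ u in Ioi 0, ‖erlangDensity m u • G u‖
      ≤ ∫ u in Ioi 0, erlangDensity m u * M :=
        integral_mono_of_nonneg (.of_forall fun _ => norm_nonneg _)
          ((integrableOn_erlangDensity m).mul_const M) (norm_erlangDensity_smul_le hGM m)
    _ = M := by rw [integral_mul_const, integral_erlangDensity, one_mul]

lemma norm_integral_erlangDensity_smul_le [NormedSpace ℝ E] (hGM : ∀ u ∈ Ioi (0 : ℝ), ‖G u‖ ≤ M)
    (m : ℕ) : ‖∫ u in Ioi 0, erlangDensity m u • G u‖ ≤ M :=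
  (norm_integral_le_integral_norm _).trans (integral_norm_erlangDensity_smul_le hGM m)

lemma hasSum_pow_smul_integral_erlangDensity_smul [NormedSpace ℂ E]
    (hG : AEStronglyMeasurable G (volume.restrict (Ioi 0))) (hGM : ∀ u ∈ Ioi (0 : ℝ), ‖G u‖ ≤ M)
    {z : ℂ} (hz : ‖z‖ < 1) :
    HasSum (fun m => z ^ m • ∫ u in Ioi 0, erlangDensity m u • G u)
      (∫ u in Ioi (0 : ℝ), Complex.exp (-(1 - z) * u) • G u) := by
  have hint : ∀ m : ℕ, Integrable (fun u => z ^ m • erlangDensity m u • G u)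
      (volume.restrict (Ioi 0)) := fun m => (integrable_erlangDensity_smul hG hGM m).smul _
  have hnorm : Summable fun m : ℕ => ∫ u in Ioi 0, ‖z ^ m • erlangDensity m u • G u‖ := by
    refine ((summable_geometric_of_lt_one (norm_nonneg z) hz).mul_right M).of_nonneg_of_le
      (fun m => integral_nonneg fun _ => norm_nonneg _) fun m => ?_
    simp only [norm_smul _ (erlangDensity m _ • G _), integral_const_mul, norm_pow]
    exact mul_le_mul_of_nonneg_left (integral_norm_erlangDensity_smul_le hGM m) (by positivity)
  have hpointwise : ∀ u : ℝ, ∑' m : ℕ, z ^ m • erlangDensity m u • G u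
      = Complex.exp (-(1 - z) * u) • G u := fun u => by
    simpa only [mul_smul, Complex.coe_smul] using
      ((hasSum_pow_mul_erlangDensity z u).smul_const (G u)).tsum_eq
  simpa only [integral_smul, hpointwise] using hasSum_integral_of_summable_integral_norm hint hnorm

end BoundedFunction

theorem statement13_general {H : Type*} [NormedAddCommGroup H] [InnerProductSpace ℂ H]
    (F : ℝ → H)
    (hF : AEStronglyMeasurable F (volume.restrict (Set.Ioi (0 : ℝ))))
    (hbd : ∃ M : ℝ, ∀ t : ℝ, 0 ≤ t → ‖F t‖ ≤ M)
    (Δt : ℝ) (hΔt : 0 < Δt) (z : ℂ) (hz : ‖z‖ < 1) :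
    Summable (fun m : ℕ =>
      ‖z ^ (m + 1) • ∫ u in Set.Ioi (0 : ℝ),
          (Real.exp (-u) * u ^ m / (Nat.factorial m : ℝ)) • F (Δt * u)‖) ∧
    (z / (Δt : ℂ)) •
        (∫ t in Set.Ioi (0 : ℝ), Complex.exp (-((1 - z) / (Δt : ℂ)) * (t : ℂ)) • F t) =
      ∑' m : ℕ, z ^ (m + 1) • ∫ u in Set.Ioi (0 : ℝ),
          (Real.exp (-u) * u ^ m / (Nat.factorial m : ℝ)) • F (Δt * u) := by
  obtain ⟨M, hM⟩ := hbd
  have hGM : ∀ u ∈ Ioi (0 : ℝ), ‖F (Δt * u)‖ ≤ M := fun u hu => hM _ (mul_pos hΔt hu).le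
  have hsum := (hasSum_pow_smul_integral_erlangDensity_smul (hF.comp_const_mul_Ioi hΔt) hGM
    hz).const_smul z
  simp only [smul_smul, ← pow_succ'] at hsum
  have hsummable := summable_norm_pow_smul_of_norm_le (norm_integral_erlangDensity_smul_le hGM) hz
  refine ⟨?_, ?_⟩
  · refine (hsummable.mul_left ‖z‖).congr fun m => ?_
    rw [pow_succ', mul_smul, norm_smul z]
    rfl
  · rw [integral_Ioi_cexp_smul_comp_const_mul F (1 - z) hΔt, smul_smul,
      div_mul_cancel₀ z (Complex.ofReal_ne_zero.mpr hΔt.ne')]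
    exact hsum.tsum_eq.symm

/-- the generating function identity behind the Backward Euler
convolution quadrature: for `|z| < 1`,
`z (1/Δt) F̂((1-z)/Δt) = Σ_{k≥1} z^k ∫₀^∞ F(Δt s) e^{-s} s^{k-1}/(k-1)! ds`,
the series converging absolutely. (`H` is taken as a complex Hilbert space, the
complexification in which the identity is stated.) -/
theorem statement13 {H : Type*} [NormedAddCommGroup H] [InnerProductSpace ℂ H]
    [CompleteSpace H] (F : ℝ → H)
    (hF : AEStronglyMeasurable F (volume.restrict (Set.Ioi (0 : ℝ))))
    (hbd : ∃ M : ℝ, ∀ t : ℝ, 0 ≤ t → ‖F t‖ ≤ M)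
    (Δt : ℝ) (hΔt : 0 < Δt) (z : ℂ) (hz : ‖z‖ < 1) :
    Summable (fun m : ℕ =>
      ‖z ^ (m + 1) • ∫ u in Set.Ioi (0 : ℝ),
          (Real.exp (-u) * u ^ m / (Nat.factorial m : ℝ)) • F (Δt * u)‖) ∧
    (z / (Δt : ℂ)) •
        (∫ t in Set.Ioi (0 : ℝ), Complex.exp (-((1 - z) / (Δt : ℂ)) * (t : ℂ)) • F t) =
      ∑' m : ℕ, z ^ (m + 1) • ∫ u in Set.Ioi (0 : ℝ),
          (Real.exp (-u) * u ^ m / (Nat.factorial m : ℝ)) • F (Δt * u) :=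
  statement13_general F hF hbd Δt hΔt z hz
end
end
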